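/- arXiv:2502.20212 — 2 statements merged into one kernel-verified Lean document; each statement's English description precedes it below -/
import Mathlib

section
/- Let Φ : ℝ^{2d} → ℝ^{2d} be differentiable with Jacobian satisfying ‖DΦ(y)^T J DΦ(y) − J‖ ≤ ε for all y, and suppose additionally ‖DΦ(y)‖ ≤ B for all y. Then for every K ≥ 1, the K-fold composition Φ^K satisfies ‖D(Φ^K)(y)^T J D(Φ^K)(y) − J‖ ≤ ε·(1 + B² + B⁴ + ... + B^{2(K−1)}) for all y. -/
open ContinuousLinearMap

/-- The standard symplectic matrix `J = [[0, I], [-I, 0]]`, as a continuous linear map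
on Euclidean space `ℝ^{2d}`. -/
noncomputable def Jclm (d : ℕ) :
    EuclideanSpace ℝ (Fin d ⊕ Fin d) →L[ℝ] EuclideanSpace ℝ (Fin d ⊕ Fin d) :=
  Matrix.toEuclideanCLM (𝕜 := ℝ) (Matrix.fromBlocks 0 1 (-1) 0)

/-!
The defect `Aᵀ J A - J` of a composite `A ∘ C` splits as `Cᵀ (Aᵀ J A - J) C + (Cᵀ J C - J)`, so
`‖defect (A ∘ C)‖ ≤ ‖C‖² ‖defect A‖ + ‖defect C‖`. By the chain rule `D(Φ^{n+1})(y)` is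
`DΦ(Φⁿ y) ∘ D(Φⁿ)(y)` with `‖D(Φⁿ)(y)‖ ≤ Bⁿ`, so the defect of `Φⁿ⁺¹` exceeds that of `Φⁿ` by at
most `B²ⁿ ε`; summing gives the geometric bound.
-/

section SymplecticDefect

variable {E : Type*} [NormedAddCommGroup E] [InnerProductSpace ℝ E] [CompleteSpace E]

noncomputable def symplecticDefect (J A : E →L[ℝ] E) : E →L[ℝ] E :=
  adjoint A ∘L J ∘L A - J

@[simp]
lemma symplecticDefect_id (J : E →L[ℝ] E) : symplecticDefect J (.id ℝ E) = 0 := by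
  simp [symplecticDefect, adjoint_id]

lemma symplecticDefect_comp (J A C : E →L[ℝ] E) :
    symplecticDefect J (A ∘L C) =
      adjoint C ∘L symplecticDefect J A ∘L C + symplecticDefect J C := by
  simp only [symplecticDefect, adjoint_comp, comp_sub, sub_comp, comp_assoc]
  abel

lemma norm_adjoint_comp_comp_le (A C : E →L[ℝ] E) :
    ‖adjoint C ∘L A ∘L C‖ ≤ ‖C‖ ^ 2 * ‖A‖ :=
  calc ‖adjoint C ∘L A ∘L C‖ ≤ ‖adjoint C‖ * (‖A‖ * ‖C‖) :=
        (opNorm_comp_le _ _).trans (by gcongr; exact opNorm_comp_le _ _)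
    _ = ‖C‖ ^ 2 * ‖A‖ := by rw [LinearIsometryEquiv.norm_map]; ring

lemma norm_symplecticDefect_comp_le (J A C : E →L[ℝ] E) :
    ‖symplecticDefect J (A ∘L C)‖ ≤ ‖C‖ ^ 2 * ‖symplecticDefect J A‖ + ‖symplecticDefect J C‖ :=
  symplecticDefect_comp J A C ▸
    (norm_add_le _ _).trans (by gcongr; exact norm_adjoint_comp_comp_le _ _)

end SymplecticDefect

section Iterate

variable {E : Type*} [NormedAddCommGroup E] [NormedSpace ℝ E] {Φ : E → E}

lemma fderiv_iterate_succ (hΦ : Differentiable ℝ Φ) (n : ℕ) (y : E) :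
    fderiv ℝ Φ^[n + 1] y = fderiv ℝ Φ (Φ^[n] y) ∘L fderiv ℝ Φ^[n] y := by
  rw [Function.iterate_succ']
  exact fderiv_comp y (hΦ _) (hΦ.iterate n y)

lemma norm_fderiv_iterate_le (hΦ : Differentiable ℝ Φ) {B : ℝ}
    (hbd : ∀ y, ‖fderiv ℝ Φ y‖ ≤ B) (n : ℕ) (y : E) : ‖fderiv ℝ Φ^[n] y‖ ≤ B ^ n := by
  have hB : 0 ≤ B := (norm_nonneg _).trans (hbd 0)
  induction n generalizing y with
  | zero => simpa using norm_id_le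
  | succ n ih =>
    rw [fderiv_iterate_succ hΦ, pow_succ']
    exact (opNorm_comp_le _ _).trans (mul_le_mul (hbd _) (ih y) (norm_nonneg _) hB)

end Iterate

lemma norm_symplecticDefect_fderiv_iterate_le {E : Type*} [NormedAddCommGroup E]
    [InnerProductSpace ℝ E] [CompleteSpace E] {Φ : E → E} (hΦ : Differentiable ℝ Φ)
    (J : E →L[ℝ] E) {ε B : ℝ} (hps : ∀ y, ‖symplecticDefect J (fderiv ℝ Φ y)‖ ≤ ε)
    (hbd : ∀ y, ‖fderiv ℝ Φ y‖ ≤ B) (n : ℕ) (y : E) :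
    ‖symplecticDefect J (fderiv ℝ Φ^[n] y)‖ ≤ ε * ∑ i ∈ Finset.range n, B ^ (2 * i) := by
  induction n with
  | zero => simp
  | succ n ih =>
    calc ‖symplecticDefect J (fderiv ℝ Φ^[n + 1] y)‖
        ≤ ‖fderiv ℝ Φ^[n] y‖ ^ 2 * ‖symplecticDefect J (fderiv ℝ Φ (Φ^[n] y))‖
          + ‖symplecticDefect J (fderiv ℝ Φ^[n] y)‖ := by
          rw [fderiv_iterate_succ hΦ]; exact norm_symplecticDefect_comp_le _ _ _
      _ ≤ (B ^ n) ^ 2 * ε + ε * ∑ i ∈ Finset.range n, B ^ (2 * i) := by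
          gcongr
          exacts [norm_fderiv_iterate_le hΦ hbd n y, hps _]
      _ = ε * ∑ i ∈ Finset.range (n + 1), B ^ (2 * i) := by
          rw [Finset.sum_range_succ]; ring

theorem stmt_5_general (d : ℕ)
    (Φ : EuclideanSpace ℝ (Fin d ⊕ Fin d) → EuclideanSpace ℝ (Fin d ⊕ Fin d))
    (hΦ : Differentiable ℝ Φ) (ε B : ℝ)
    (hps : ∀ y, ‖adjoint (fderiv ℝ Φ y) ∘L Jclm d ∘L fderiv ℝ Φ y - Jclm d‖ ≤ ε)
    (hbd : ∀ y, ‖fderiv ℝ Φ y‖ ≤ B) :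
    ∀ K : ℕ, 1 ≤ K → ∀ y,
      ‖adjoint (fderiv ℝ Φ^[K] y) ∘L Jclm d ∘L fderiv ℝ Φ^[K] y - Jclm d‖
        ≤ ε * ∑ i ∈ Finset.range K, B ^ (2 * i) :=
  fun K _ y => norm_symplecticDefect_fderiv_iterate_le hΦ (Jclm d) hps hbd K y

theorem stmt_5 (d : ℕ)
    (Φ : EuclideanSpace ℝ (Fin d ⊕ Fin d) → EuclideanSpace ℝ (Fin d ⊕ Fin d))
    (hΦ : Differentiable ℝ Φ) (ε B : ℝ) (hε : 0 ≤ ε) (hB : 0 ≤ B)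
    (hps : ∀ y, ‖adjoint (fderiv ℝ Φ y) ∘L Jclm d ∘L fderiv ℝ Φ y - Jclm d‖ ≤ ε)
    (hbd : ∀ y, ‖fderiv ℝ Φ y‖ ≤ B) :
    ∀ K : ℕ, 1 ≤ K → ∀ y,
      ‖adjoint (fderiv ℝ Φ^[K] y) ∘L Jclm d ∘L fderiv ℝ Φ^[K] y - Jclm d‖
        ≤ ε * ∑ i ∈ Finset.range K, B ^ (2 * i) :=
  stmt_5_general d Φ hΦ ε B hps hbd
end

section
/- Let ε < 1 and let A be a 2d×2d real matrix with ‖Aᵀ J A − J‖₂ ≤ ε. Then A is invertible and ‖A^{-1}‖₂ ≤ ‖A‖₂ / (1 − ε). -/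
open Matrix

open scoped Matrix.Norms.L2Operator

/-- The standard symplectic matrix `J = [[0, I], [-I, 0]]` in `d × d` blocks. -/
noncomputable def Jmat (d : ℕ) : Matrix (Fin d ⊕ Fin d) (Fin d ⊕ Fin d) ℝ :=
  Matrix.fromBlocks 0 1 (-1) 0

/-!
With `E = J⁻¹ (Aᵀ J A - J)` we have `J⁻¹ Aᵀ J A = 1 + E` and `‖E‖ ≤ ε < 1`, so the Neumann series
inverts `1 + E` with `‖(1 + E)⁻¹‖ ≤ (1 - ε)⁻¹`. Hence `(1 + E)⁻¹ J⁻¹ Aᵀ J` is a left inverse of `A`,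
and since `J` is orthogonal its norm is at most `‖(1 + E)⁻¹‖ ‖A‖`.
-/

theorem Units.norm_oneSub_inv_le {R : Type*} [NormedRing R] [HasSummableGeomSeries R]
    (h₁ : ‖(1 : R)‖ ≤ 1) (t : R) (ht : ‖t‖ < 1) :
    ‖(↑(Units.oneSub t ht)⁻¹ : R)‖ ≤ (1 - ‖t‖)⁻¹ :=
  (tsum_geometric_le_of_norm_lt_one t ht).trans (by linarith)

namespace CStarRing

variable {E : Type*} [NormedRing E] [StarRing E] [CStarRing E]

theorem norm_one_le : ‖(1 : E)‖ ≤ 1 := by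
  nontriviality E
  exact norm_one.le

theorem exists_leftInverse_norm_le_of_norm_star_mul_mul_sub_le [HasSummableGeomSeries E]
    (u : unitary E) (a : E) {ε : ℝ} (hε : ε < 1) (h : ‖star a * u * a - u‖ ≤ ε) :
    ∃ l : E, l * a = 1 ∧ ‖l‖ ≤ ‖a‖ / (1 - ε) := by
  set t : E := star (u : E) * (u - star a * u * a) with ht_def
  have ht_le : ‖t‖ ≤ ε := by
    rwa [ht_def, ← Unitary.coe_star, norm_coe_unitary_mul, norm_sub_rev]
  have ht : ‖t‖ < 1 := ht_le.trans_lt hε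
  have h_one_sub : 1 - t = star (u : E) * star a * u * a := by
    simp only [t, mul_sub, Unitary.coe_star_mul_self, mul_assoc, sub_sub_cancel]
  set m := Units.oneSub t ht
  refine ⟨↑m⁻¹ * (star (u : E) * star a * u), ?_, ?_⟩
  · rw [mul_assoc, ← h_one_sub, ← Units.val_oneSub t ht, Units.inv_mul]
  · calc ‖↑m⁻¹ * (star (u : E) * star a * u)‖
        ≤ ‖(↑m⁻¹ : E)‖ * ‖a‖ := by
          refine (norm_mul_le _ _).trans_eq ?_
          rw [norm_mul_coe_unitary, ← Unitary.coe_star, norm_coe_unitary_mul, norm_star]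
      _ ≤ (1 - ε)⁻¹ * ‖a‖ := by
          gcongr
          exact (Units.norm_oneSub_inv_le norm_one_le t ht).trans
            (inv_anti₀ (by linarith) (by linarith))
      _ = ‖a‖ / (1 - ε) := by rw [div_eq_inv_mul]

end CStarRing

theorem Jmat_mem_unitary (d : ℕ) : Jmat d ∈ unitary (Matrix (Fin d ⊕ Fin d) (Fin d ⊕ Fin d) ℝ) := by
  rw [Unitary.mem_iff]
  constructor <;>
    simp [Jmat, star_eq_conjTranspose, fromBlocks_transpose, fromBlocks_multiply, fromBlocks_one]

theorem stmt_18 (d : ℕ) (ε : ℝ) (hε : ε < 1)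
    (A : Matrix (Fin d ⊕ Fin d) (Fin d ⊕ Fin d) ℝ)
    (h : ‖Aᵀ * Jmat d * A - Jmat d‖ ≤ ε) :
    IsUnit A ∧ ‖A⁻¹‖ ≤ ‖A‖ / (1 - ε) := by
  have h_star : star A = Aᵀ := by
    rw [star_eq_conjTranspose, conjTranspose_eq_transpose_of_trivial]
  obtain ⟨l, hl, hl_norm⟩ :=
    CStarRing.exists_leftInverse_norm_le_of_norm_star_mul_mul_sub_le
      ⟨Jmat d, Jmat_mem_unitary d⟩ A hε (by rwa [h_star])
  exact ⟨IsUnit.of_mul_eq_one l (mul_eq_one_comm.mp hl), inv_eq_left_inv hl ▸ hl_norm⟩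
end
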